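/- Let R > 0 and μ > 0. Define R_i : [0, π/2) → ℝ by R_i(u) = R/μ + √((S(u) − r(u))²·(S(u) − l(u)) / S(u)), where r(u) = R/cos u, l(u) = 2·R·tan u, S(u) = (2·r(u) + l(u))/2. Then the arc-length-based controller input γ_s(u) = 1 / R_i(u) is strictly monotonically decreasing on [0, π/2). In particular, γ_s(u) ≤ μ/R for all u ∈ [0, π/2). -/

import Mathlib

open Real

/-- The varying curvature radius of the geometric controller (Eq. (12)). -/
noncomputable def Ri (R μ : ℝ) (u : ℝ) : ℝ :=
  let r := R / Real.cos u
  let l := 2 * R * Real.tan u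
  let S := (2 * r + l) / 2
  R / μ + Real.sqrt ((S - r) ^ 2 * (S - l) / S)

/-- The arc-length-based normal-curvature controller input (Eq. (13)). -/
noncomputable def γs (R μ : ℝ) (u : ℝ) : ℝ := 1 / Ri R μ u

/-!
With `s = sin u` and `c = cos u`, the quantities of `Ri` are `S - r = R s / c`,
`S - l = R (1 - s) / c` and `S = R (1 + s) / c`. Since `c² = (1 - s)(1 + s)`, the radicand
collapses to the perfect square `(R s / (1 + s))²`, so `Ri = R / μ + R s / (1 + s)` on
`[0, π/2)`. This is strictly increasing in `u` and equals `R / μ` at `u = 0`, so `γs = 1 / Ri`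
strictly decreases from its value `μ / R` at `u = 0`.
-/

lemma strictMonoOn_div_one_add {K : Type*} [Field K] [LinearOrder K] [IsStrictOrderedRing K] :
    StrictMonoOn (fun x : K => x / (1 + x)) (Set.Ioi (-1)) := by
  intro a ha b hb hab
  have ha' : 0 < 1 + a := by linarith [Set.mem_Ioi.mp ha]
  have hb' : 0 < 1 + b := by linarith [Set.mem_Ioi.mp hb]
  rw [div_lt_div_iff₀ ha' hb']
  linarith

lemma Ri_eq_of_mem_Ico {R : ℝ} (μ : ℝ) (hR : 0 < R) {u : ℝ} (hu : u ∈ Set.Ico 0 (π / 2)) :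
    Ri R μ u = R / μ + R * (sin u / (1 + sin u)) := by
  have hc : 0 < cos u := cos_pos_of_mem_Ioo ⟨by linarith [pi_pos, hu.1], hu.2⟩
  have hs : 0 ≤ sin u := sin_nonneg_of_nonneg_of_le_pi hu.1 (by linarith [pi_pos, hu.2])
  have hradicand : ((2 * (R / cos u) + 2 * R * tan u) / 2 - R / cos u) ^ 2 *
        ((2 * (R / cos u) + 2 * R * tan u) / 2 - 2 * R * tan u) /
        ((2 * (R / cos u) + 2 * R * tan u) / 2) = (R * (sin u / (1 + sin u))) ^ 2 := by
    rw [tan_eq_sin_div_cos]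
    field_simp
    linear_combination (-sin u ^ 2) * sin_sq_add_cos_sq u
  simp only [Ri]
  rw [hradicand, sqrt_sq (by positivity)]

lemma Ri_zero {R : ℝ} (μ : ℝ) (hR : 0 < R) : Ri R μ 0 = R / μ := by
  rw [Ri_eq_of_mem_Ico μ hR ⟨le_rfl, by positivity⟩, sin_zero, zero_div, mul_zero, add_zero]

lemma Ri_strictMonoOn {R : ℝ} (μ : ℝ) (hR : 0 < R) :
    StrictMonoOn (Ri R μ) (Set.Ico 0 (π / 2)) := by
  intro a ha b hb hab
  rw [Ri_eq_of_mem_Ico μ hR ha, Ri_eq_of_mem_Ico μ hR hb]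
  have hsin : sin a < sin b :=
    strictMonoOn_sin ⟨by linarith [pi_pos, ha.1], ha.2.le⟩ ⟨by linarith [pi_pos, hb.1], hb.2.le⟩ hab
  have hsin_a : 0 ≤ sin a := sin_nonneg_of_nonneg_of_le_pi ha.1 (by linarith [pi_pos, ha.2])
  have hfrac : sin a / (1 + sin a) < sin b / (1 + sin b) :=
    strictMonoOn_div_one_add (by simp only [Set.mem_Ioi]; linarith)
      (by simp only [Set.mem_Ioi]; linarith) hsin
  gcongr

/-- **Remark 1:** larger steering angles make `γ_s = 1/R_i` strictly smaller,
and `γ_s(u) ≤ μ/R` for all `u ∈ [0, π/2)`. -/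
theorem γs_strictAntiOn_and_bounded (R μ : ℝ) (hR : 0 < R) (hμ : 0 < μ) :
    StrictAntiOn (γs R μ) (Set.Ico 0 (π / 2)) ∧
      ∀ u ∈ Set.Ico 0 (π / 2), γs R μ u ≤ μ / R := by
  have hzero : (0 : ℝ) ∈ Set.Ico 0 (π / 2) := ⟨le_rfl, by positivity⟩
  have hRi_pos : ∀ u ∈ Set.Ico 0 (π / 2), 0 < Ri R μ u := fun u hu => by
    have hRi_ge : Ri R μ 0 ≤ Ri R μ u := (Ri_strictMonoOn μ hR).monotoneOn hzero hu hu.1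
    rw [Ri_zero μ hR] at hRi_ge
    exact (div_pos hR hμ).trans_le hRi_ge
  have hanti : StrictAntiOn (γs R μ) (Set.Ico 0 (π / 2)) := fun a ha b hb hab =>
    one_div_lt_one_div_of_lt (hRi_pos a ha) (Ri_strictMonoOn μ hR ha hb hab)
  refine ⟨hanti, fun u hu => ?_⟩
  calc γs R μ u ≤ γs R μ 0 := hanti.antitoneOn hzero hu hu.1
    _ = μ / R := by rw [γs, Ri_zero μ hR, one_div_div]
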